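/- arXiv:1608.03999 — 3 statements merged into one kernel-verified Lean document; each statement's English description precedes it below -/
import Mathlib

section
/- The (weighted) max-tricut problem is polynomially reducible to max-3OP: given a complete undirected graph G with nonnegative edge weights, the induced weighted tournament H_G (with two direction vertices per edge of G, four arcs per edge forming a 4-cycle each carrying that edge's weight, and all remaining arcs weighted 0) satisfies: for every integer k, G admits an (unordered) vertex tripartition of cut-value at least k if and only if H_G admits an ordered tripartition of score at least k. -/
/-- The cut value of the tripartition (given as a level function `p`) of a
weighted undirected graph with symmetric edge weights `g`: the total weight of
edges whose endpoints lie in different pieces. -/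
noncomputable def triCutValue {V : Type*} [Fintype V] (g : V → V → ℝ) (p : V → Fin 3) : ℝ :=
  (∑ a : V, ∑ b : V, if p a ≠ p b then g a b else 0) / 2

/-- The edge weights of the tournament `H_G` induced by a complete weighted
graph `G` on vertex set `V` with weights `g`: for each edge `{a,b}` of `G`,
the two direction vertices `d_{ab} = inr (a,b)` and `d_{ba} = inr (b,a)` carry
the 4-cycle of arcs `a → d_{ab} → b → d_{ba} → a`, each of weight `g a b`;
all remaining arcs have weight `0`.  (Antisymmetric, reversal convention.) -/
def wHG {V : Type*} [DecidableEq V] (g : V → V → ℝ) :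
    (V ⊕ V × V) → (V ⊕ V × V) → ℝ
  | .inl v, .inr p => (if v = p.1 then g p.1 p.2 else 0) - (if v = p.2 then g p.1 p.2 else 0)
  | .inr p, .inl v => -((if v = p.1 then g p.1 p.2 else 0) - (if v = p.2 then g p.1 p.2 else 0))
  | _, _ => 0

/-- The score of an ordered `k`-partition (level function `ℓ`, higher level =
higher piece) of a weighted tournament with antisymmetric weights `u`: the
total weight of down arcs minus the total weight of up arcs. -/
def opScore {W : Type*} [Fintype W] {k : ℕ} (u : W → W → ℝ) (ℓ : W → Fin k) : ℝ :=
  ∑ x : W, ∑ y : W, if ℓ y < ℓ x then u x y else 0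

/-- Real-valued sign of the comparison of two levels in `Fin 3`. -/
def S3 (u v : Fin 3) : ℝ := (if v < u then 1 else 0) - (if u < v then 1 else 0)

/-- The level chosen for the direction vertex `d_{ab}` when `a` has level `α`
and `b` has level `β`. -/
def ch (α β : Fin 3) : Fin 3 := if α < β then (if β = 1 then 2 else 0) else 1

/-- Per-edge soundness: any placement of the two direction vertices of an edge
yields total score at most the cut indicator. -/
lemma key_le (α β x y : Fin 3) :
    S3 α x - S3 β x + (S3 β y - S3 α y) ≤ if α = β then 0 else 1 := by
  fin_cases α <;> fin_cases β <;> fin_cases x <;> fin_cases y <;> simp [S3]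

/-- Per-edge completeness: the chosen placement of the two direction vertices
of an edge yields total score at least the cut indicator. -/
lemma key_ge (α β : Fin 3) :
    (if α = β then (0:ℝ) else 1) ≤
      S3 α (ch α β) - S3 β (ch α β) + (S3 β (ch β α) - S3 α (ch β α)) := by
  fin_cases α <;> fin_cases β <;> simp [S3, ch]

/-- The score of an ordered tripartition of `H_G` as a sum over ordered pairs
of `G`-vertices. -/
lemma opScore_wHG {n : ℕ} (g : Fin n → Fin n → ℝ)
    (ℓ : (Fin n ⊕ Fin n × Fin n) → Fin 3) :
    opScore (wHG g) ℓ =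
      ∑ a : Fin n, ∑ b : Fin n,
        (S3 (ℓ (Sum.inl a)) (ℓ (Sum.inr (a, b)))
          - S3 (ℓ (Sum.inl b)) (ℓ (Sum.inr (a, b)))) * g a b := by
  unfold opScore
  rw [Fintype.sum_sum_type]
  simp only [Fintype.sum_sum_type, wHG, ite_self, Finset.sum_const_zero, add_zero, zero_add]
  rw [Finset.sum_comm, ← Finset.sum_add_distrib]
  have key : ∀ q : Fin n × Fin n,
      ((∑ v : Fin n, if ℓ (Sum.inr q) < ℓ (Sum.inl v) then
          (if v = q.1 then g q.1 q.2 else 0) - (if v = q.2 then g q.1 q.2 else 0) else 0) +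
        ∑ v : Fin n, if ℓ (Sum.inl v) < ℓ (Sum.inr q) then
          -((if v = q.1 then g q.1 q.2 else 0) - (if v = q.2 then g q.1 q.2 else 0)) else 0) =
      (S3 (ℓ (Sum.inl q.1)) (ℓ (Sum.inr q))
        - S3 (ℓ (Sum.inl q.2)) (ℓ (Sum.inr q))) * g q.1 q.2 := by
    intro q
    rw [← Finset.sum_add_distrib]
    have step : ∀ v : Fin n,
        ((if ℓ (Sum.inr q) < ℓ (Sum.inl v) then
            (if v = q.1 then g q.1 q.2 else 0) - (if v = q.2 then g q.1 q.2 else 0) else 0) +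
          if ℓ (Sum.inl v) < ℓ (Sum.inr q) then
            -((if v = q.1 then g q.1 q.2 else 0) - (if v = q.2 then g q.1 q.2 else 0)) else 0) =
        S3 (ℓ (Sum.inl v)) (ℓ (Sum.inr q)) * (if v = q.1 then g q.1 q.2 else 0)
          - S3 (ℓ (Sum.inl v)) (ℓ (Sum.inr q)) * (if v = q.2 then g q.1 q.2 else 0) := by
      intro v
      unfold S3
      split_ifs <;> ring
    rw [Finset.sum_congr rfl fun v _ => step v, Finset.sum_sub_distrib]
    simp [mul_ite, mul_zero, Finset.sum_ite_eq']
    ring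
  rw [Finset.sum_congr rfl fun q _ => key q, Fintype.sum_prod_type]

/-- Symmetrize a weighted double sum over ordered pairs. -/
lemma sum_symmetrize {n : ℕ} (g : Fin n → Fin n → ℝ) (hsym : ∀ a b, g a b = g b a)
    (c : Fin n → Fin n → ℝ) :
    ∑ a : Fin n, ∑ b : Fin n, c a b * g a b =
      (∑ a : Fin n, ∑ b : Fin n, (c a b + c b a) * g a b) / 2 := by
  have h : ∑ a : Fin n, ∑ b : Fin n, c b a * g a b =
      ∑ a : Fin n, ∑ b : Fin n, c a b * g a b := by
    rw [Finset.sum_comm]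
    exact Finset.sum_congr rfl fun a _ => Finset.sum_congr rfl fun b _ => by rw [hsym b a]
  have expand : ∑ a : Fin n, ∑ b : Fin n, (c a b + c b a) * g a b =
      (∑ a : Fin n, ∑ b : Fin n, c a b * g a b) +
        ∑ a : Fin n, ∑ b : Fin n, c b a * g a b := by
    rw [← Finset.sum_add_distrib]
    exact Finset.sum_congr rfl fun a _ => by
      rw [← Finset.sum_add_distrib]
      exact Finset.sum_congr rfl fun b _ => by ring
  rw [expand, h]
  ring

/-- Rewrite the cut value with an indicator factor. -/
lemma triCutValue_eq {n : ℕ} (g : Fin n → Fin n → ℝ) (p : Fin n → Fin 3) :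
    triCutValue g p =
      (∑ a : Fin n, ∑ b : Fin n, (if p a = p b then (0:ℝ) else 1) * g a b) / 2 := by
  unfold triCutValue
  congr 1
  refine Finset.sum_congr rfl fun a _ => Finset.sum_congr rfl fun b _ => ?_
  by_cases h : p a = p b <;> simp [h]

/-- Max-tricut reduces to max-3OP: for every integer `k`, the complete weighted
graph `G` (nonnegative symmetric weights `g`) admits a vertex tripartition of
cut value at least `k` iff the induced weighted tournament `H_G` admits an
ordered tripartition of score at least `k`. -/
theorem tricut_iff_threeOP {n : ℕ} (g : Fin n → Fin n → ℝ)
    (hsym : ∀ a b, g a b = g b a) (hdiag : ∀ a, g a a = 0)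
    (hnonneg : ∀ a b, 0 ≤ g a b) (k : ℤ) :
    (∃ p : Fin n → Fin 3, (k : ℝ) ≤ triCutValue g p) ↔
      (∃ ℓ : (Fin n ⊕ Fin n × Fin n) → Fin 3, (k : ℝ) ≤ opScore (wHG g) ℓ) := by
  constructor
  · rintro ⟨p, hp⟩
    refine ⟨Sum.elim p (fun q => ch (p q.1) (p q.2)), hp.trans ?_⟩
    rw [opScore_wHG, triCutValue_eq]
    simp only [Sum.elim_inl, Sum.elim_inr]
    rw [sum_symmetrize g hsym
      (fun a b => S3 (p a) (ch (p a) (p b)) - S3 (p b) (ch (p a) (p b)))]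
    gcongr with a _ b _
    · exact hnonneg a b
    · exact key_ge (p a) (p b)
  · rintro ⟨ℓ, hl⟩
    refine ⟨fun v => ℓ (Sum.inl v), hl.trans ?_⟩
    rw [opScore_wHG, triCutValue_eq]
    rw [sum_symmetrize g hsym
      (fun a b => S3 (ℓ (Sum.inl a)) (ℓ (Sum.inr (a, b)))
        - S3 (ℓ (Sum.inl b)) (ℓ (Sum.inr (a, b))))]
    gcongr with a _ b _
    · exact hnonneg a b
    · exact key_le (ℓ (Sum.inl a)) (ℓ (Sum.inl b)) (ℓ (Sum.inr (a, b))) (ℓ (Sum.inr (b, a)))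
end

section
/- Max-cut is polynomially reducible to max-tricut: given a weighted graph G = (V,E,w) with nonnegative integer weights, form G* by adding a new vertex ♣ joined to every vertex of V by an edge of weight σ = 1 + Σ_{e∈E} w(e). Then G has a bipartition of cut value at least k if and only if G* has a tripartition of cut value at least |V|·σ + k; moreover, every maximum-value tripartition of G* places ♣ alone in its own piece. -/
/-- The cut value of a partition (given as a level function `p : V → Fin j`) of
a weighted undirected graph with symmetric natural-number edge weights `g`:
the total weight of edges whose endpoints lie in different pieces. -/
def cutValue {V : Type*} [Fintype V] {j : ℕ} (g : V → V → ℕ) (p : V → Fin j) : ℕ :=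
  (∑ a : V, ∑ b : V, if p a ≠ p b then g a b else 0) / 2

/-- The total weight `∑_{e ∈ E} w(e)` of a symmetric weighting `g` (each
undirected edge counted once). -/
def totalWeight {V : Type*} [Fintype V] (g : V → V → ℕ) : ℕ :=
  (∑ a : V, ∑ b : V, g a b) / 2

/-- The weighted graph `G*`: a new vertex `♣` (= `none`) is joined to every
vertex of `V` by an edge of weight `σ`; edges within `V` keep their weights. -/
def starGraph {V : Type*} (g : V → V → ℕ) (σ : ℕ) : Option V → Option V → ℕ
  | some a, some b => g a b
  | none, some _ => σ
  | some _, none => σ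
  | none, none => 0

section Aux
variable {V : Type*} [Fintype V] [DecidableEq V]

lemma two_dvd_double_sum (h : V → V → ℕ) (hs : ∀ a b, h a b = h b a)
    (hd : ∀ a, h a a = 0) : 2 ∣ ∑ a : V, ∑ b : V, h a b := by
  classical
  suffices H : ∀ s : Finset V, 2 ∣ ∑ a ∈ s, ∑ b ∈ s, h a b from H _
  intro s
  induction s using Finset.induction_on with
  | empty => simp
  | @insert x s hx ih =>
    rw [Finset.sum_insert hx, Finset.sum_insert hx]
    have e1 : ∑ a ∈ s, ∑ b ∈ insert x s, h a b
        = (∑ a ∈ s, h a x) + ∑ a ∈ s, ∑ b ∈ s, h a b := by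
      rw [← Finset.sum_add_distrib]
      exact Finset.sum_congr rfl fun a _ => Finset.sum_insert hx
    have e2 : ∑ a ∈ s, h a x = ∑ a ∈ s, h x a :=
      Finset.sum_congr rfl fun a _ => hs a x
    rw [e1, hd, e2]
    omega

lemma cut_num_even (g : V → V → ℕ) (hsym : ∀ a b, g a b = g b a) {j : ℕ} (p : V → Fin j) :
    2 ∣ ∑ a : V, ∑ b : V, (if p a ≠ p b then g a b else 0) := by
  apply two_dvd_double_sum
  · intro a b
    simp only [ne_comm (a := p a), hsym a b]
  · intro a; simp

lemma sum_ite_card (P : V → Prop) [DecidablePred P] (σ : ℕ) :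
    ∑ v : V, (if P v then σ else 0) = σ * (Finset.univ.filter P).card := by
  rw [Finset.sum_ite, Finset.sum_const, Finset.sum_const_zero, add_zero, smul_eq_mul, mul_comm]

lemma cut_star (g : V → V → ℕ) (hsym : ∀ a b, g a b = g b a) (σ : ℕ)
    (q : Option V → Fin 3) :
    cutValue (starGraph g σ) q
      = σ * (Finset.univ.filter fun v => q none ≠ q (some v)).card
        + cutValue g (fun v => q (some v)) := by
  classical
  set m := (Finset.univ.filter fun v => q none ≠ q (some v)).card with hm
  have key : (∑ a : Option V, ∑ b : Option V,
      if q a ≠ q b then starGraph g σ a b else 0)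
    = 2 * (σ * m)
      + ∑ a : V, ∑ b : V, (if q (some a) ≠ q (some b) then g a b else 0) := by
    rw [Fintype.sum_option]
    have hcol : (∑ b : Option V, if q none ≠ q b then starGraph g σ none b else 0)
        = σ * m := by
      rw [Fintype.sum_option]
      have h0 : (if q none ≠ q none then starGraph g σ none none else 0) = 0 := by simp
      rw [h0, zero_add, hm]
      exact sum_ite_card _ σ
    rw [hcol]
    have hrow : ∀ a : V, ∑ b : Option V, (if q (some a) ≠ q b then starGraph g σ (some a) b else 0)
        = (if q (some a) ≠ q none then σ else 0)
          + ∑ b : V, (if q (some a) ≠ q (some b) then g a b else 0) := by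
      intro a; rw [Fintype.sum_option]; rfl
    simp only [hrow]
    rw [Finset.sum_add_distrib]
    have h1 : ∑ a : V, (if q (some a) ≠ q none then σ else 0) = σ * m := by
      rw [sum_ite_card (fun v => q (some v) ≠ q none) σ, hm]
      have : Finset.univ.filter (fun v => q (some v) ≠ q none)
          = Finset.univ.filter (fun v => q none ≠ q (some v)) :=
        Finset.filter_congr fun v _ => by simp [ne_comm]
      rw [this]
    rw [h1]
    ring
  have hev := cut_num_even g hsym (fun v => q (some v))
  obtain ⟨t, ht⟩ := hev
  unfold cutValue
  rw [key, ht]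
  omega

lemma cut_le_total (g : V → V → ℕ) {j : ℕ} (p : V → Fin j) :
    cutValue g p ≤ totalWeight g := by
  apply Nat.div_le_div_right
  apply Finset.sum_le_sum; intro a _
  apply Finset.sum_le_sum; intro b _
  split <;> simp

end Aux

lemma fin3_key : ∀ z x y : Fin 3, x ≠ z → y ≠ z →
    (((if x = (if z = 0 then 1 else 0) then (0 : Fin 2) else 1)
        ≠ (if y = (if z = 0 then 1 else 0) then (0 : Fin 2) else 1)) ↔ x ≠ y) := by decide


/-- Max-cut reduces to max-tricut: with `σ = 1 + ∑_{e∈E} w(e)`, the graph `G`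
has a bipartition of cut value at least `k` iff `G*` has a tripartition of cut
value at least `|V|·σ + k`; moreover every maximum-value tripartition of `G*`
places `♣` alone in its own piece. -/
theorem maxcut_reduces_to_maxtricut {V : Type*} [Fintype V] [DecidableEq V]
    (g : V → V → ℕ) (hsym : ∀ a b, g a b = g b a) (hdiag : ∀ a, g a a = 0) :
    (∀ k : ℕ,
      (∃ p : V → Fin 2, k ≤ cutValue g p) ↔
        (∃ q : Option V → Fin 3,
          Fintype.card V * (1 + totalWeight g) + k ≤
            cutValue (starGraph g (1 + totalWeight g)) q)) ∧
    (∀ q : Option V → Fin 3,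
      (∀ q' : Option V → Fin 3,
        cutValue (starGraph g (1 + totalWeight g)) q' ≤
          cutValue (starGraph g (1 + totalWeight g)) q) →
      ∀ v : V, q (some v) ≠ q none) := by
  classical
  set σ := 1 + totalWeight g with hσ
  set n := Fintype.card V with hn
  -- any tripartition of cut value ≥ n*σ separates ♣ from everything
  have hAll : ∀ q : Option V → Fin 3, n * σ ≤ cutValue (starGraph g σ) q →
      ∀ v : V, q (some v) ≠ q none := by
    intro q hq v hv
    rw [cut_star g hsym] at hq
    set m := (Finset.univ.filter fun v => q none ≠ q (some v)).card with hm
    have hc : cutValue g (fun v => q (some v)) ≤ totalWeight g := cut_le_total g _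
    have hmn : m ≤ n := by
      rw [hm, hn, ← Finset.card_univ]
      exact Finset.card_filter_le _ _
    have hmlt : m < n := by
      rcases Nat.lt_or_ge m n with h | h
      · exact h
      · exfalso
        have heq : m = n := le_antisymm hmn h
        have : (Finset.univ.filter fun v => q none ≠ q (some v)) = Finset.univ := by
          apply Finset.eq_univ_of_card
          rw [← hm]; omega
        have hv' : v ∈ Finset.univ.filter fun v => q none ≠ q (some v) := by
          rw [this]; exact Finset.mem_univ v
        rw [Finset.mem_filter] at hv'
        exact hv'.2 hv.symm
    have hlt : σ * m + cutValue g (fun v => q (some v)) < σ * n := by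
      calc σ * m + cutValue g (fun v => q (some v))
          ≤ σ * m + totalWeight g := by omega
        _ < σ * (m + 1) := by rw [Nat.mul_succ]; omega
        _ ≤ σ * n := Nat.mul_le_mul_left σ hmlt
    rw [mul_comm] at hq
    exact absurd (lt_of_le_of_lt hq hlt) (lt_irrefl _)
  constructor
  · intro k
    constructor
    · rintro ⟨p, hp⟩
      refine ⟨fun o => o.elim 2 (fun v => (p v).castSucc), ?_⟩
      rw [cut_star g hsym]
      have hfilt : (Finset.univ.filter fun v =>
          (Option.elim (none : Option V) (2 : Fin 3) (fun v => (p v).castSucc))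
            ≠ Option.elim (some v) 2 (fun v => (p v).castSucc)) = Finset.univ := by
        apply Finset.filter_true_of_mem
        intro v _
        simp only [Option.elim]
        intro h
        exact absurd h.symm (Fin.ne_of_lt (Fin.castSucc_lt_last (p v)))
      rw [hfilt, Finset.card_univ, ← hn]
      have hcut : cutValue g (fun v =>
          Option.elim (some v) (2 : Fin 3) (fun v => (p v).castSucc)) = cutValue g p := by
        unfold cutValue
        congr 1
        apply Finset.sum_congr rfl; intro a _
        apply Finset.sum_congr rfl; intro b _
        simp [Fin.castSucc_inj]
      rw [hcut, mul_comm]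
      omega
    · rintro ⟨q, hq⟩
      have hq0 : n * σ ≤ cutValue (starGraph g σ) q := le_trans (Nat.le_add_right _ _) hq
      have hall := hAll q hq0
      rw [cut_star g hsym] at hq
      have hfilt : (Finset.univ.filter fun v => q none ≠ q (some v)) = Finset.univ :=
        Finset.filter_true_of_mem fun v _ => (hall v).symm
      rw [hfilt, Finset.card_univ, ← hn, mul_comm] at hq
      refine ⟨fun v => if q (some v) = (if q none = 0 then 1 else 0) then 0 else 1, ?_⟩
      have hcut : cutValue g
          (fun v => if q (some v) = (if q none = 0 then 1 else 0) then (0 : Fin 2) else 1)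
          = cutValue g (fun v => q (some v)) := by
        unfold cutValue
        congr 1
        apply Finset.sum_congr rfl; intro a _
        apply Finset.sum_congr rfl; intro b _
        congr 1
        exact propext (fin3_key (q none) (q (some a)) (q (some b)) (hall a) (hall b))
      rw [hcut]
      omega
  · intro q hmax v
    have h0 : n * σ ≤ cutValue (starGraph g σ) q := by
      refine le_trans ?_ (hmax (fun o => o.elim 0 (fun _ => 1)))
      rw [cut_star g hsym]
      have hfilt : (Finset.univ.filter fun v : V =>
          (Option.elim (none : Option V) (0 : Fin 3) (fun _ => 1))
            ≠ Option.elim (some v) (0 : Fin 3) (fun _ => 1)) = Finset.univ := by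
        apply Finset.filter_true_of_mem
        intro v _
        simp [Option.elim]
      rw [hfilt, Finset.card_univ, ← hn]
      simp [cutValue, mul_comm]
    exact hAll q h0 v
end

section
/- For any antisymmetric integer-valued edge-weight function w on a finite alternative set V with |V| ≥ 3, there exists a finite profile Π of trichotomous weak orders on V such that the induced net-majority weights satisfy w_Π(x,y) = 2·w(x,y) for all distinct x, y. -/
section TrichAux

variable {V : Type*} [Fintype V] [DecidableEq V]

/-- First gadget ballot for the pair `(a,b)`: `a` on top, `b` middle, rest bottom. -/
def trichBal1 (a b : V) : V → Fin 3 := fun v => if v = a then 2 else if v = b then 1 else 0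

/-- Second gadget ballot for the pair `(a,b)`: rest on top, `a` middle, `b` bottom. -/
def trichBal2 (a b : V) : V → Fin 3 := fun v => if v = a then 1 else if v = b then 0 else 2

lemma trichBal1_surj {a b c : V} (hab : a ≠ b) (hca : c ≠ a) (hcb : c ≠ b) :
    Function.Surjective (trichBal1 a b) := by
  intro z
  fin_cases z
  · exact ⟨c, by simp [trichBal1, hca, hcb]⟩
  · exact ⟨b, by simp [trichBal1, hab.symm]⟩
  · exact ⟨a, by simp [trichBal1]⟩

lemma trichBal2_surj {a b c : V} (hab : a ≠ b) (hca : c ≠ a) (hcb : c ≠ b) :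
    Function.Surjective (trichBal2 a b) := by
  intro z
  fin_cases z
  · exact ⟨b, by simp [trichBal2, hab.symm]⟩
  · exact ⟨a, by simp [trichBal2]⟩
  · exact ⟨c, by simp [trichBal2, hca, hcb]⟩

/-- Signed comparison of `x` vs `y` on a ballot. -/
def trichSc (f : V → Fin 3) (x y : V) : ℤ :=
  (if f y < f x then 1 else 0) - (if f x < f y then 1 else 0)

lemma trichGadget (a b x y : V) (hab : a ≠ b) (hxy : x ≠ y) :
    trichSc (trichBal1 a b) x y + trichSc (trichBal2 a b) x y
      = (if (a, b) = (x, y) then 2 else 0) + (if (a, b) = (y, x) then -2 else 0) := by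
  by_cases h1 : x = a <;> by_cases h2 : y = a <;> by_cases h3 : x = b <;>
    by_cases h4 : y = b <;> subst_vars <;>
    simp_all [trichSc, trichBal1, trichBal2, Prod.ext_iff, eq_comm]

end TrichAux

/-- Any antisymmetric integer-valued edge-weight function `w` on a set of at
least three alternatives is (twice) realizable by a finite profile of
trichotomous weak orders: each ballot is a level function `V → Fin 3` that is
surjective (three nonempty indifference classes, higher level = ranked higher),
and the induced net-majority weights satisfy `w_Π(x,y) = 2·w(x,y)`. -/
theorem exists_trichotomous_profile_realizing_double_weight
    {V : Type*} [Fintype V] [DecidableEq V] (hV : 3 ≤ Fintype.card V)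
    (w : V → V → ℤ) (hanti : ∀ x y : V, w x y = -w y x) :
    ∃ (N : ℕ) (ballot : Fin N → V → Fin 3),
      (∀ i : Fin N, Function.Surjective (ballot i)) ∧
      ∀ x y : V, x ≠ y →
        ((Finset.univ.filter fun i => ballot i y < ballot i x).card : ℤ)
          - ((Finset.univ.filter fun i => ballot i x < ballot i y).card : ℤ)
        = 2 * w x y := by
  classical
  have hdiag : ∀ a : V, w a a = 0 := fun a => by have := hanti a a; omega
  -- multiplicity of the gadget for the ordered pair `p`
  let m : V × V → ℕ := fun p => (w p.1 p.2).toNat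
  -- index type of the profile
  let I : Type _ := (p : V × V) × (Fin (m p) × Bool)
  let B : I → V → Fin 3 := fun i =>
    if i.2.2 then trichBal1 i.1.1 i.1.2 else trichBal2 i.1.1 i.1.2
  have hposne : ∀ p : V × V, 0 < m p → p.1 ≠ p.2 := by
    rintro ⟨a, b⟩ hk h
    have h' : a = b := h
    subst h'
    have hk' : 0 < (w a a).toNat := hk
    have hw : 0 < w a a := by omega
    rw [hdiag] at hw
    exact lt_irrefl _ hw
  have hthird : ∀ a b : V, ∃ c : V, c ≠ a ∧ c ≠ b := by
    intro a b
    have hcard : ({a, b} : Finset V).card < Fintype.card V := by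
      have := Finset.card_insert_le a ({b} : Finset V)
      simp only [Finset.card_singleton] at this
      omega
    have hne : (Finset.univ \ ({a, b} : Finset V)).Nonempty := by
      rw [← Finset.card_pos, Finset.card_sdiff_of_subset (Finset.subset_univ _), Finset.card_univ]
      omega
    obtain ⟨c, hc⟩ := hne
    simp only [Finset.mem_sdiff, Finset.mem_insert, Finset.mem_singleton] at hc
    exact ⟨c, fun h => hc.2 (Or.inl h), fun h => hc.2 (Or.inr h)⟩
  let N := Fintype.card I
  let e : Fin N ≃ I := (Fintype.equivFin I).symm
  refine ⟨N, fun i => B (e i), ?_, ?_⟩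
  · intro i
    rcases h : e i with ⟨⟨a, b⟩, k, s⟩
    have hab : a ≠ b := hposne (a, b) k.pos
    obtain ⟨c, hca, hcb⟩ := hthird a b
    show Function.Surjective (B (e i))
    rw [h]
    cases s
    · exact trichBal2_surj hab hca hcb
    · exact trichBal1_surj hab hca hcb
  · intro x y hxy
    have hLHS :
        ((Finset.univ.filter fun i => B (e i) y < B (e i) x).card : ℤ)
            - ((Finset.univ.filter fun i => B (e i) x < B (e i) y).card : ℤ)
          = ∑ i : Fin N, trichSc (B (e i)) x y := by
      rw [Finset.card_filter, Finset.card_filter]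
      push_cast
      rw [← Finset.sum_sub_distrib]
      rfl
    rw [hLHS]
    rw [e.sum_comp (fun i => trichSc (B i) x y)]
    have hsig : ∑ i : I, trichSc (B i) x y
        = ∑ p : V × V, ((m p : ℤ) *
            ((if p = (x, y) then 2 else 0) + (if p = (y, x) then -2 else 0))) := by
      rw [← Finset.univ_sigma_univ, Finset.sum_sigma]
      refine Finset.sum_congr rfl fun p _ => ?_
      rcases Nat.eq_zero_or_pos (m p) with hmp | hmp
      · have : IsEmpty (Fin (m p) × Bool) := by rw [hmp]; infer_instance
        rw [Finset.univ_eq_empty, Finset.sum_empty, hmp]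
        simp
      · have hab : p.1 ≠ p.2 := hposne p hmp
        rw [Fintype.sum_prod_type]
        have hinner : ∀ k : Fin (m p), ∑ s : Bool, trichSc (B ⟨p, k, s⟩) x y
            = (if p = (x, y) then 2 else 0) + (if p = (y, x) then -2 else 0) := by
          intro k
          rw [Fintype.sum_bool]
          show trichSc (trichBal1 p.1 p.2) x y + trichSc (trichBal2 p.1 p.2) x y = _
          exact trichGadget p.1 p.2 x y hab hxy
        rw [Finset.sum_congr rfl fun k _ => hinner k, Finset.sum_const, Finset.card_univ,
          Fintype.card_fin, nsmul_eq_mul]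
    rw [hsig]
    have hsplit : ∀ p : V × V, (m p : ℤ) *
          ((if p = (x, y) then 2 else 0) + (if p = (y, x) then -2 else 0))
        = (if p = (x, y) then (m p : ℤ) * 2 else 0)
            + (if p = (y, x) then (m p : ℤ) * (-2) else 0) := by
      intro p
      by_cases h1 : p = (x, y)
      · have h2 : p ≠ (y, x) := by
          rw [h1]; intro h; exact hxy (congrArg Prod.fst h)
        rw [if_pos h1, if_pos h1, if_neg h2, if_neg h2]; ring
      · by_cases h2 : p = (y, x)
        · rw [if_neg h1, if_pos h2, if_neg h1, if_pos h2]; ring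
        · rw [if_neg h1, if_neg h2, if_neg h1, if_neg h2]; ring
    rw [Finset.sum_congr rfl fun p _ => hsplit p, Finset.sum_add_distrib,
      Finset.sum_ite_eq' Finset.univ (x, y), Finset.sum_ite_eq' Finset.univ (y, x)]
    simp only [Finset.mem_univ, if_true]
    have hwm : ((m (x, y) : ℤ)) * 2 + ((m (y, x) : ℤ)) * (-2) = 2 * w x y := by
      show ((w x y).toNat : ℤ) * 2 + ((w y x).toNat : ℤ) * (-2) = 2 * w x y
      have := hanti y x
      omega
    exact hwm
end
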